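/- Expected squared distance between the BaR-learner and full-data OLS coefficients: under a Bernoulli(1/2) design with imputed residuals R̂(X_j,Y_j) = e_j·R̂(X_j,Y_j,1) + (1−e_j)·R̂(X_j,Y_j,0) where R̂(x,y,z) = [y − μ̂(x)]/(z − 1/2) and e_j = P(Z_j = 1 | X_j, Y_j), and coefficient vectors β̂_I = (XᵀX)^{−1}[Σ_{i∈I} X_i R̂_i + Σ_{j∉I} X_j R̂(X_j,Y_j)] and β̂_{[n]} = (XᵀX)^{−1}Σ_{i=1}^n X_i R̂_i with R̂_i = [Y_i − μ̂(X_i)]/(Z_i − 1/2), it holds that E[‖β̂_I − β̂_{[n]}‖² | X_{[n]}, Y_{[n]}] = 4·Σ_{j∉I} X_jᵀ(XᵀX)^{−2}X_j · [Y_j − μ̂(X_j)]² · (1 − C_j²), where C_j = |2e_j − 1|. -/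

import Mathlib

/-!
Outside `I` the BaR learner replaces each residual `R̂_j` by its conditional mean `R̄_j`, so
`β̂_I − β̂_{[n]} = G ∑_{j ∉ I} X_j (R̄_j − R̂_j)` with `G = (XᵀX)⁻¹`: a sum of independent
centred terms, one per unit `j ∉ I`. In the expected squared norm the cross terms therefore
vanish, and unit `j` contributes `‖G X_j‖² Var(R̂_j) = X_jᵀ G² X_j · 4 D_j² (1 − C_j²)`, using
that `G` is symmetric.
-/

open Matrix Finset

section ProductWeights

variable {ι β R : Type*} [Fintype ι] [DecidableEq ι] [Fintype β] [CommSemiring R]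

/-- Expectation of `F` when the coordinates `z i` are independent with laws `p i`. -/
def prodExpect (p : ι → β → R) (F : (ι → β) → R) : R :=
  ∑ z : ι → β, (∏ i, p i (z i)) * F z

variable (p : ι → β → R)

theorem prodExpect_prod (g : ι → β → R) :
    prodExpect p (fun z => ∏ i, g i (z i)) = ∏ i, ∑ b, p i b * g i b := by
  simp only [prodExpect, ← prod_mul_distrib, Fintype.prod_sum]

theorem prodExpect_sum {κ : Type*} (s : Finset κ) (F : κ → (ι → β) → R) :
    prodExpect p (fun z => ∑ k ∈ s, F k z) = ∑ k ∈ s, prodExpect p (F k) := by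
  simp only [prodExpect, mul_sum]
  exact sum_comm

theorem prodExpect_const_mul (c : R) (F : (ι → β) → R) :
    prodExpect p (fun z => c * F z) = c * prodExpect p F := by
  simp only [prodExpect, mul_sum, mul_left_comm c]

omit [Fintype β] in
theorem prod_mulSingle_apply (j : ι) (f : β → R) (z : ι → β) :
    ∏ i, (Pi.mulSingle j f : ι → β → R) i (z i) = f (z j) := by
  rw [Fintype.prod_eq_single j fun i hi => by simp [Pi.mulSingle_eq_of_ne hi],
    Pi.mulSingle_eq_same]

variable {p} (hp : ∀ i, ∑ b, p i b = 1)
include hp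

theorem prodExpect_apply (j : ι) (f : β → R) :
    prodExpect p (fun z => f (z j)) = ∑ b, p j b * f b := by
  calc prodExpect p (fun z => f (z j))
      = prodExpect p (fun z => ∏ i, (Pi.mulSingle j f : ι → β → R) i (z i)) := by
        simp only [prod_mulSingle_apply]
    _ = ∑ b, p j b * f b := by
        rw [prodExpect_prod, Fintype.prod_eq_single j fun i hi => by
          simp [Pi.mulSingle_eq_of_ne hi, hp], Pi.mulSingle_eq_same]

theorem prodExpect_apply_mul_apply {i j : ι} (hij : i ≠ j) (f g : β → R) :
    prodExpect p (fun z => f (z i) * g (z j)) = (∑ b, p i b * f b) * ∑ b, p j b * g b := by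
  calc prodExpect p (fun z => f (z i) * g (z j))
      = prodExpect p
          (fun z => ∏ k, (Pi.mulSingle i f * Pi.mulSingle j g : ι → β → R) k (z k)) := by
        simp only [Pi.mul_apply, prod_mul_distrib, prod_mulSingle_apply]
    _ = (∑ b, p i b * f b) * ∑ b, p j b * g b := by
        rw [prodExpect_prod, Fintype.prod_eq_mul i j hij]
        · simp [Pi.mulSingle_eq_of_ne hij, Pi.mulSingle_eq_of_ne hij.symm]
        · rintro k ⟨hki, hkj⟩
          simp [Pi.mulSingle_eq_of_ne hki, Pi.mulSingle_eq_of_ne hkj, hp]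

theorem prodExpect_sum_mul_sq {s : Finset ι} {W : ι → β → R}
    (hW : ∀ i ∈ s, ∑ b, p i b * W i b = 0) (a : ι → R) :
    prodExpect p (fun z => (∑ i ∈ s, a i * W i (z i)) ^ 2)
      = ∑ i ∈ s, a i ^ 2 * ∑ b, p i b * W i b ^ 2 := by
  have hexpand : ∀ z : ι → β, (∑ i ∈ s, a i * W i (z i)) ^ 2
      = ∑ i ∈ s, ∑ j ∈ s, a i * a j * (W i (z i) * W j (z j)) := by
    intro z
    simp only [sq, sum_mul_sum]
    exact sum_congr rfl fun i _ => sum_congr rfl fun j _ => by ring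
  simp only [hexpand, prodExpect_sum, prodExpect_const_mul]
  refine sum_congr rfl fun i hi => ?_
  rw [sum_eq_single_of_mem i hi fun j _ hji => by
    rw [prodExpect_apply_mul_apply hp hji.symm, hW i hi, zero_mul, mul_zero]]
  rw [prodExpect_apply hp i fun b => W i b * W i b]
  simp only [sq]

end ProductWeights

theorem sum_mulVec_sq {m n R : Type*} [Fintype m] [Fintype n] [CommRing R]
    (G : Matrix m n R) (v : n → R) :
    ∑ k, (G *ᵥ v) k ^ 2 = ∑ k, ∑ l, v k * (Gᵀ * G) k l * v l := by
  calc ∑ k, (G *ᵥ v) k ^ 2 = v ⬝ᵥ ((Gᵀ * G) *ᵥ v) := by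
        rw [← mulVec_mulVec, dotProduct_mulVec, vecMul_transpose]
        simp only [dotProduct, sq]
    _ = ∑ k, ∑ l, v k * (Gᵀ * G) k l * v l := by
        simp only [dotProduct, mulVec, mul_sum, mul_assoc]

theorem mulVec_sum_add_sum_compl_sub {ι m n R : Type*} [Fintype ι] [DecidableEq ι] [Fintype n]
    [CommRing R] (G : Matrix m n R) (X : Matrix ι n R) (s : Finset ι) (u w : ι → R) :
    G *ᵥ (fun k => ∑ i ∈ s, X i k * u i + ∑ j ∈ sᶜ, X j k * w j)
        - G *ᵥ (fun k => ∑ i, X i k * u i)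
      = ∑ j ∈ sᶜ, (w j - u j) • G *ᵥ X j := by
  have hvec : (fun k => ∑ i ∈ s, X i k * u i + ∑ j ∈ sᶜ, X j k * w j)
      - (fun k => ∑ i, X i k * u i) = ∑ j ∈ sᶜ, (w j - u j) • X j := by
    ext k
    rw [Pi.sub_apply, ← sum_add_sum_compl s, add_sub_add_left_eq_sub, ← sum_sub_distrib,
      Finset.sum_apply]
    exact sum_congr rfl fun j _ => by simp only [Pi.smul_apply, smul_eq_mul]; ring
  simp only [← mulVec_sub, hvec, mulVec_sum, mulVec_smul]

theorem stmt_13_general (n d : ℕ) (X : Matrix (Fin n) (Fin d) ℝ) (Y muhat : Fin n → ℝ)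
    (e : Fin n → ℝ)
    (I : Finset (Fin n)) :
    let D : Fin n → ℝ := fun j => Y j - muhat j
    let Rhat : Fin n → Bool → ℝ := fun j z => D j / ((if z then (1 : ℝ) else 0) - 1 / 2)
    let Rbar : Fin n → ℝ := fun j => e j * Rhat j true + (1 - e j) * Rhat j false
    let G := (X.transpose * X)⁻¹
    let betaI : (Fin n → Bool) → (Fin d → ℝ) := fun z =>
      G.mulVec (fun k => ∑ i ∈ I, X i k * Rhat i (z i) + ∑ j ∈ Iᶜ, X j k * Rbar j)
    let betaFull : (Fin n → Bool) → (Fin d → ℝ) := fun z =>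
      G.mulVec (fun k => ∑ i, X i k * Rhat i (z i))
    ∑ z : Fin n → Bool, (∏ j, (if z j then e j else 1 - e j)) *
        (∑ k, (betaI z k - betaFull z k) ^ 2)
      = 4 * ∑ j ∈ Iᶜ, (∑ k, ∑ l, X j k * (G * G) k l * X j l)
          * (D j) ^ 2 * (1 - (2 * e j - 1) ^ 2) := by
  intro D Rhat Rbar G betaI betaFull
  set p : Fin n → Bool → ℝ := fun j b => if b then e j else 1 - e j
  set W : Fin n → Bool → ℝ := fun j b => Rbar j - Rhat j b
  have hp : ∀ j, ∑ b, p j b = 1 := fun j => by simp [p]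
  have hW : ∀ j, ∑ b, p j b * W j b = 0 := fun j => by
    simp only [Fintype.sum_bool, p, W, Rbar, Rhat, ↓reduceIte, Bool.false_eq_true]; ring
  have hW2 : ∀ j, ∑ b, p j b * W j b ^ 2 = 4 * D j ^ 2 * (1 - (2 * e j - 1) ^ 2) := fun j => by
    simp only [Fintype.sum_bool, p, W, Rbar, Rhat, ↓reduceIte, Bool.false_eq_true]; ring
  have hdiff : ∀ z k, betaI z k - betaFull z k = ∑ j ∈ Iᶜ, (G *ᵥ X j) k * W j (z j) := by
    intro z k
    rw [← Pi.sub_apply, mulVec_sum_add_sum_compl_sub]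
    simp only [Finset.sum_apply, Pi.smul_apply, smul_eq_mul, mul_comm, W]
  have hG : Gᵀ = G := by
    have hgram : (Xᵀ * X).IsSymm := by rw [IsSymm, transpose_mul, transpose_transpose]
    exact hgram.inv.eq
  calc ∑ z : Fin n → Bool, (∏ j, (if z j then e j else 1 - e j)) *
        (∑ k, (betaI z k - betaFull z k) ^ 2)
      = ∑ k, prodExpect p (fun z => (∑ j ∈ Iᶜ, (G *ᵥ X j) k * W j (z j)) ^ 2) := by
        simp only [hdiff, ← prodExpect_sum]
        rfl
    _ = ∑ k, ∑ j ∈ Iᶜ, (G *ᵥ X j) k ^ 2 * ∑ b, p j b * W j b ^ 2 := by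
        simp only [prodExpect_sum_mul_sq hp fun j _ => hW j]
    _ = 4 * ∑ j ∈ Iᶜ, (∑ k, ∑ l, X j k * (G * G) k l * X j l)
          * (D j) ^ 2 * (1 - (2 * e j - 1) ^ 2) := by
        rw [sum_comm, mul_sum]
        refine sum_congr rfl fun j _ => ?_
        rw [← sum_mul, sum_mulVec_sq, hG, hW2]
        ring

/-- Expected squared distance between the BaR-learner coefficient `β̂_I`
(imputed residuals outside `I`) and the full-data OLS coefficient `β̂_{[n]}`,
conditionally on covariates and outcomes, under independent assignments
`Z_j ~ Bernoulli(e_j)`: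
`E[‖β̂_I − β̂_{[n]}‖²] = 4 ∑_{j∉I} X_jᵀ(XᵀX)⁻²X_j · D_j² · (1 − C_j²)`. -/
theorem stmt_13 (n d : ℕ) (X : Matrix (Fin n) (Fin d) ℝ) (Y muhat : Fin n → ℝ)
    (e : Fin n → ℝ) (he : ∀ j, e j ∈ Set.Icc (0 : ℝ) 1)
    (I : Finset (Fin n)) (hX : IsUnit (X.transpose * X).det) :
    let D : Fin n → ℝ := fun j => Y j - muhat j
    let Rhat : Fin n → Bool → ℝ := fun j z => D j / ((if z then (1 : ℝ) else 0) - 1 / 2)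
    let Rbar : Fin n → ℝ := fun j => e j * Rhat j true + (1 - e j) * Rhat j false
    let G := (X.transpose * X)⁻¹
    let betaI : (Fin n → Bool) → (Fin d → ℝ) := fun z =>
      G.mulVec (fun k => ∑ i ∈ I, X i k * Rhat i (z i) + ∑ j ∈ Iᶜ, X j k * Rbar j)
    let betaFull : (Fin n → Bool) → (Fin d → ℝ) := fun z =>
      G.mulVec (fun k => ∑ i, X i k * Rhat i (z i))
    ∑ z : Fin n → Bool, (∏ j, (if z j then e j else 1 - e j)) *
        (∑ k, (betaI z k - betaFull z k) ^ 2)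
      = 4 * ∑ j ∈ Iᶜ, (∑ k, ∑ l, X j k * (G * G) k l * X j l)
          * (D j) ^ 2 * (1 - (2 * e j - 1) ^ 2) :=
  stmt_13_general n d X Y muhat e I
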